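/- Let N = 2·3^m with m ≥ 2. The number of elements k ∈ Z/NZ for which the k-monomial minimal solution of (E_N) is irreducible equals 4·3^{m−1} + 3. -/

import Mathlib

open Matrix

/-- The elementary matrix `[[a, -1], [1, 0]]` over `ZMod N`. -/
def genMat {N : ℕ} (a : ZMod N) : Matrix (Fin 2) (Fin 2) (ZMod N) :=
  !![a, -1; 1, 0]

/-- `Mword [a₁, …, aₙ]` is the matrix `Mₙ(a₁, …, aₙ) = genMat aₙ * ⋯ * genMat a₁`. -/
def Mword {N : ℕ} (l : List (ZMod N)) : Matrix (Fin 2) (Fin 2) (ZMod N) :=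
  (l.reverse.map genMat).prod

/-- A tuple (encoded as a list) is a solution of `(E_N)` if its matrix is `±Id`. -/
def IsSolutionE {N : ℕ} (l : List (ZMod N)) : Prop :=
  Mword l = 1 ∨ Mword l = -1

/-- The size of the `k`-monomial minimal solution of `(E_N)`: the least positive `n`
such that the constant `n`-tuple `(k, …, k)` is a solution of `(E_N)`. -/
noncomputable def monomialSize (N : ℕ) (k : ZMod N) : ℕ :=
  sInf {n : ℕ | 0 < n ∧ IsSolutionE (List.replicate n k)}

/-- The `k`-monomial minimal solution of `(E_N)`. -/
noncomputable def monoSol (N : ℕ) (k : ZMod N) : List (ZMod N) :=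
  List.replicate (monomialSize N k) k

/-- The sum `⊕` of two tuples:
`(a₁,…,aₘ) ⊕ (b₁,…,bₗ) = (a₁+bₗ, a₂, …, aₘ₋₁, aₘ+b₁, b₂, …, bₗ₋₁)`. -/
def oplus {N : ℕ} (a b : List (ZMod N)) : List (ZMod N) :=
  (a.headD 0 + b.getLastD 0) ::
    ((a.drop 1).dropLast ++ (a.getLastD 0 + b.headD 0) :: (b.drop 1).dropLast)

/-- Two tuples are equivalent (`∼`) if one is obtained from the other by a cyclic
permutation, possibly composed with order reversal. -/
def TupEquiv {N : ℕ} (c d : List (ZMod N)) : Prop :=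
  (∃ i, d = c.rotate i) ∨ (∃ i, d = c.reverse.rotate i)

/-- A tuple is reducible if it is equivalent to a sum `a ⊕ b` where `b` is a solution of
`(E_N)` and both `a`, `b` have length at least `3`. -/
def IsReducibleE {N : ℕ} (c : List (ZMod N)) : Prop :=
  ∃ a b : List (ZMod N), 3 ≤ a.length ∧ 3 ≤ b.length ∧ IsSolutionE b ∧
    TupEquiv c (oplus a b)

/-- An irreducible solution of `(E_N)`: a solution of size at least `3` that is not
reducible (the solution `(0,0)` is not considered irreducible). -/
def IsIrreducibleE {N : ℕ} (c : List (ZMod N)) : Prop :=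
  IsSolutionE c ∧ 3 ≤ c.length ∧ ¬ IsReducibleE c

/-- A reducible solution of `(E_N)`: a solution that is not irreducible. -/
def IsReducibleSol {N : ℕ} (c : List (ZMod N)) : Prop :=
  IsSolutionE c ∧ ¬ IsIrreducibleE c

/-- `N` is monomially irreducible if for every nonzero `k ∈ ZMod N` the `k`-monomial
minimal solution of `(E_N)` is irreducible. -/
def MonomiallyIrreducible (N : ℕ) : Prop :=
  ∀ k : ZMod N, k ≠ 0 → IsIrreducibleE (monoSol N k)

/-- `N` is quasi monomially irreducible if for every integer `k` coprime to `N` the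
`(k mod N)`-monomial minimal solution of `(E_N)` is irreducible. -/
def QuasiMonomiallyIrreducible (N : ℕ) : Prop :=
  ∀ k : ℤ, Int.gcd k (N : ℤ) = 1 → IsIrreducibleE (monoSol N (k : ZMod N))

/-- `N` is semi monomially irreducible: if `N` is even but not divisible by `4`, this
requires that for every integer `a` coprime to `N/2` the `(2a mod N)`-monomial minimal
solution of `(E_N)` is irreducible; otherwise (i.e. `N` odd or divisible by `4`), it
requires the same for every integer `a` coprime to `N`. -/
def SemiMonomiallyIrreducible (N : ℕ) : Prop :=
  if 2 ∣ N ∧ ¬ (4 ∣ N) then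
    ∀ a : ℤ, Int.gcd a ((N / 2 : ℕ) : ℤ) = 1 →
      IsIrreducibleE (monoSol N ((2 * a : ℤ) : ZMod N))
  else
    ∀ a : ℤ, Int.gcd a (N : ℤ) = 1 →
      IsIrreducibleE (monoSol N ((2 * a : ℤ) : ZMod N))

/-!
Write `c_n = cheb k n`: `genMat k ^ n` has lower-left entry `c_n`, and `c_{n+1}² − c_{n+2} c_n = 1`.
Modulo `N = 2·3^m` the only square roots of `1` are `±1`, so `(k, …, k)` of length `n > 0` is a
solution iff `c_n = 0`; the size `s` of the monomial solution is the first zero of `c`, and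
`c_n = 0 ↔ s ∣ n`. A solution `(x, k, …, k, y)` of length `j + 1` forces `c_j² = 1`, and conversely
`c_j² = 1` makes `(y, k, …, k, y)` with `y = c_j c_{j-1}` a solution, so the monomial solution is
irreducible iff `k ≠ 0` and `c_j² ≠ 1` for `2 ≤ j ≤ s − 2`.

Lift `k` to an integer `a`. Modulo `2` and modulo `3` the zeros of `c` are periodic, with period
`2` or `3` depending on `a`. If `3 ∤ a`, `c_j² = 1` gives `2·3^m ∣ c_{j-1} c_{j+1}`, and the factor
whose index is divisible by `3` already vanishes modulo `2·3^m`, contradicting minimality of `s`.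
If `3^{m-1} ∣ a` and `k ≠ 0`, then `k³ = 3k`, `s = 6`, and only `c_3² = 1 + k²` can equal `1`,
which happens iff `a` is even. Otherwise `v = v₃(a)` lies in `[1, m − 2]`, and
`v₃(c_{2i}) = v + v₃(i)` shows both that `s ≥ 2·3^{m-v}` and that `c_j² = 1` for
`j = 2·3^{m-1-v} + 1`. Hence the irreducible classes are the `4·3^{m-1}` residues prime to `3` and
the three odd multiples of `3^{m-1}`.
-/

/-- `cheb k (n + 1)` is the rescaled Chebyshev polynomial `Polynomial.Chebyshev.S R n` evaluated at
`k`, i.e. the continuant of `(k, …, k)` of length `n`. -/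
def cheb {R : Type*} [CommRing R] (k : R) : ℕ → R
  | 0 => 0
  | 1 => 1
  | n + 2 => k * cheb k (n + 1) - cheb k n

section Cheb

variable {R S : Type*} [CommRing R] [CommRing S] (k : R)

@[simp] lemma cheb_zero : cheb k 0 = 0 := rfl

@[simp] lemma cheb_one : cheb k 1 = 1 := rfl

lemma cheb_add_two (n : ℕ) : cheb k (n + 2) = k * cheb k (n + 1) - cheb k n := rfl

@[simp] lemma cheb_two : cheb k 2 = k := by simp [cheb_add_two]

lemma map_cheb (f : R →+* S) (n : ℕ) : f (cheb k n) = cheb (f k) n := by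
  induction n using Nat.twoStepInduction with
  | zero => simp
  | one => simp
  | more n ih₁ ih₂ => simp [cheb_add_two, ih₁, ih₂]

lemma cheb_add (p q : ℕ) :
    cheb k (p + q + 1) = cheb k (p + 1) * cheb k (q + 1) - cheb k p * cheb k q := by
  induction p using Nat.twoStepInduction generalizing q with
  | zero => simp
  | one => rw [show 1 + q + 1 = q + 2 by ring, cheb_add_two]; simp
  | more p ih₁ ih₂ =>
    rw [show p + 2 + q + 1 = p + q + 1 + 2 by ring, cheb_add_two,
      show p + q + 1 + 1 = p + 1 + q + 1 by ring, ih₁, ih₂, cheb_add_two k (p + 1),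
      cheb_add_two k p]
    ring

lemma cheb_sq_sub_mul (n : ℕ) : cheb k (n + 1) ^ 2 - cheb k (n + 2) * cheb k n = 1 := by
  induction n with
  | zero => simp
  | succ n ih =>
    rw [cheb_add_two k (n + 1)]
    linear_combination ih + cheb k (n + 2) * cheb_add_two k n

lemma cheb_three_mul (n : ℕ) : cheb k (3 * n) = cheb k n *
    (3 * cheb k (n + 1) ^ 2 - 3 * k * cheb k n * cheb k (n + 1) + (k ^ 2 - 1) * cheb k n ^ 2) := by
  rcases n with _ | j
  · simp
  have h₁ := cheb_add k (2 * j + 2) j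
  have h₂ := cheb_add k (j + 1) (j + 1)
  have h₃ := cheb_add k (j + 1) j
  rw [show 2 * j + 2 + j + 1 = 3 * (j + 1) by ring] at h₁
  rw [show j + 1 + (j + 1) + 1 = 2 * j + 2 + 1 by ring] at h₂
  rw [show j + 1 + j + 1 = 2 * j + 2 by ring] at h₃
  rw [h₁, h₂, h₃]
  linear_combination
    cheb k (j + 1) * (k * cheb k (j + 1) - 2 * cheb k (j + 2) + cheb k j) * cheb_add_two k j

lemma cheb_add_of_cheb_eq_zero {p : ℕ} (hp : cheb k p = 0) (n : ℕ) :
    cheb k (n + p) = cheb k (p + 1) * cheb k n := by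
  cases n with
  | zero => simp [hp]
  | succ n => rw [show n + 1 + p = p + n + 1 by ring, cheb_add, hp]; ring

lemma cheb_eq_zero_iff_dvd {p : ℕ} (hp₀ : 0 < p) (hp : cheb k p = 0)
    (hmin : ∀ i, 0 < i → i < p → cheb k i ≠ 0) (n : ℕ) : cheb k n = 0 ↔ p ∣ n := by
  have hunit : IsUnit (cheb k (p + 1)) :=
    IsUnit.of_mul_eq_one (cheb k (p + 1)) (by simpa [hp, sq] using cheb_sq_sub_mul k p)
  have hper : ∀ q r, cheb k (r + p * q) = cheb k (p + 1) ^ q * cheb k r := by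
    intro q r
    induction q with
    | zero => simp
    | succ q ih => rw [mul_add_one, ← add_assoc, cheb_add_of_cheb_eq_zero k hp, ih]; ring
  rw [← Nat.mod_add_div n p, hper, (hunit.pow _).mul_right_eq_zero,
    Nat.dvd_add_left (dvd_mul_right _ _)]
  have hlt : n % p < p := Nat.mod_lt n hp₀
  constructor
  · intro h
    by_contra hndvd
    exact hmin _ (Nat.pos_of_ne_zero fun h0 => hndvd (by rw [h0]; exact dvd_zero p)) hlt h
  · intro h
    rw [Nat.eq_zero_of_dvd_of_lt h hlt, cheb_zero]

end Cheb

lemma List.exists_eq_cons_append_singleton {α : Type*} {l : List α} (h : 2 ≤ l.length) :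
    ∃ x m y, l = x :: (m ++ [y]) := by
  rcases l with _ | ⟨x, t⟩
  · simp at h
  · exact ⟨x, t.dropLast, t.getLast (by rintro rfl; simp at h),
      by rw [List.dropLast_append_getLast]⟩

lemma Int.exists_eq_pow_mul_and_not_dvd {a : ℤ} (ha : a ≠ 0) {p : ℤ} (hp : p.natAbs ≠ 1) :
    ∃ e b, ¬ p ∣ b ∧ a = p ^ e * b := by
  obtain ⟨b, hab, hb⟩ :=
    (Int.finiteMultiplicity_iff.mpr ⟨hp, ha⟩).exists_eq_pow_mul_and_not_dvd
  exact ⟨_, b, hb, hab⟩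

def TrivialSqrtOne (N : ℕ) : Prop :=
  ∀ x : ZMod N, x ^ 2 = 1 → x = 1 ∨ x = -1

section MonomialSolutions

variable {N : ℕ}

lemma genMat_pow_succ (k : ZMod N) (n : ℕ) :
    genMat k ^ (n + 1) = !![cheb k (n + 2), -cheb k (n + 1); cheb k (n + 1), -cheb k n] := by
  induction n with
  | zero => simp [genMat]
  | succ n ih =>
    rw [pow_succ, ih, genMat, Matrix.mul_fin_two]
    ext i j
    fin_cases i <;> fin_cases j <;> simp [cheb_add_two k (n + 1), cheb_add_two k n] <;> ring

lemma Mword_replicate (k : ZMod N) (n : ℕ) : Mword (List.replicate n k) = genMat k ^ n := by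
  simp [Mword, List.prod_replicate]

lemma Mword_cons_append (x y : ZMod N) (l : List (ZMod N)) :
    Mword (x :: (l ++ [y])) = genMat y * Mword l * genMat x := by
  simp [Mword, mul_assoc]

lemma exists_pos_cheb_eq_zero [NeZero N] (k : ZMod N) : ∃ n, 0 < n ∧ cheb k n = 0 := by
  have hunit : IsUnit (genMat k) := by
    simp [Matrix.isUnit_iff_isUnit_det, genMat, Matrix.det_fin_two_of]
  obtain ⟨n, hn, hpow⟩ := (isOfFinOrder_of_finite hunit.unit).exists_pow_eq_one
  obtain ⟨d, rfl⟩ : ∃ d, n = d + 1 := ⟨n - 1, by omega⟩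
  have h := congrArg (fun M => M 1 0) (congrArg Units.val hpow)
  simp only [Units.val_pow_eq_pow_val, IsUnit.unit_spec, genMat_pow_succ, Units.val_one] at h
  exact ⟨d + 1, hn, by simpa using h⟩

lemma isSolutionE_replicate_iff (hN : TrivialSqrtOne N) (k : ZMod N) {n : ℕ} (hn : 0 < n) :
    IsSolutionE (List.replicate n k) ↔ cheb k n = 0 := by
  obtain ⟨d, rfl⟩ : ∃ d, n = d + 1 := ⟨n - 1, by omega⟩
  rw [IsSolutionE, Mword_replicate, genMat_pow_succ]
  constructor
  · rintro (h | h) <;> simpa using congrFun (congrFun h 1) 0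
  · intro h
    have hd : cheb k d = -cheb k (d + 2) := by linear_combination cheb_add_two k d + k * h
    have hsq : cheb k (d + 2) ^ 2 = 1 := by
      linear_combination cheb_sq_sub_mul k d - cheb k (d + 1) * h + cheb k (d + 2) * hd
    rw [h, hd]
    rcases hN _ hsq with hε | hε <;> rw [hε] <;> [left; right] <;>
      ext i j <;> fin_cases i <;> fin_cases j <;> simp

lemma monomialSize_eq_sInf (hN : TrivialSqrtOne N) (k : ZMod N) :
    monomialSize N k = sInf {n | 0 < n ∧ cheb k n = 0} := by
  simp only [monomialSize]
  congr 1
  ext n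
  exact and_congr_right (isSolutionE_replicate_iff hN k)

lemma monomialSize_spec [NeZero N] (hN : TrivialSqrtOne N) (k : ZMod N) :
    0 < monomialSize N k ∧ cheb k (monomialSize N k) = 0 := by
  rw [monomialSize_eq_sInf hN]
  exact Nat.sInf_mem (exists_pos_cheb_eq_zero k)

lemma cheb_eq_zero_iff_monomialSize_dvd [NeZero N] (hN : TrivialSqrtOne N) (k : ZMod N)
    (n : ℕ) : cheb k n = 0 ↔ monomialSize N k ∣ n := by
  obtain ⟨hpos, hzero⟩ := monomialSize_spec hN k
  refine cheb_eq_zero_iff_dvd k hpos hzero (fun i hi hlt hi0 => ?_) n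
  rw [monomialSize_eq_sInf hN] at hlt
  exact Nat.not_le.mpr hlt (Nat.sInf_le ⟨hi, hi0⟩)

lemma three_le_monomialSize_iff [Fact (1 < N)] (hN : TrivialSqrtOne N) (k : ZMod N) :
    3 ≤ monomialSize N k ↔ k ≠ 0 := by
  have hdvd := cheb_eq_zero_iff_monomialSize_dvd hN k
  have hpos := (monomialSize_spec hN k).1
  constructor
  · rintro h3 rfl
    have := Nat.le_of_dvd two_pos ((hdvd 2).mp (by simp))
    omega
  · intro hk
    by_contra hlt
    interval_cases monomialSize N k
    · exact one_ne_zero ((hdvd 1).mpr dvd_rfl)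
    · exact hk (by simpa using (hdvd 2).mpr dvd_rfl)

lemma sq_cheb_eq_one_of_isSolutionE {x y k : ZMod N} {r : ℕ}
    (h : IsSolutionE (x :: (List.replicate r k ++ [y]))) : cheb k (r + 1) ^ 2 = 1 := by
  have h11 : Mword (x :: (List.replicate r k ++ [y])) 1 1 = -cheb k (r + 1) := by
    rw [Mword_cons_append, Mword_replicate]
    rcases r with _ | r
    · simp [genMat]
    · rw [genMat_pow_succ]
      simp [genMat, Matrix.mul_apply, Fin.sum_univ_two]
  rcases h with h | h <;> rw [h] at h11 <;>
    simp only [Matrix.neg_apply, one_apply_eq, neg_inj] at h11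
  · rw [← neg_sq, ← h11, one_pow]
  · rw [← h11, one_pow]

lemma isSolutionE_of_sq_cheb_eq_one (hN : TrivialSqrtOne N) {k : ZMod N} {r : ℕ}
    (h : cheb k (r + 2) ^ 2 = 1) :
    IsSolutionE (cheb k (r + 2) * cheb k (r + 1) ::
      (List.replicate (r + 1) k ++ [cheb k (r + 2) * cheb k (r + 1)])) := by
  set y := cheb k (r + 2) * cheb k (r + 1)
  have hcassini := cheb_sq_sub_mul k r
  have key : Mword (y :: (List.replicate (r + 1) k ++ [y])) = -cheb k (r + 2) • 1 := by
    rw [Mword_cons_append, Mword_replicate, genMat_pow_succ]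
    ext i j
    fin_cases i <;> fin_cases j <;> simp [genMat, Matrix.mul_apply, Fin.sum_univ_two, y]
    · linear_combination (cheb k (r + 2) * cheb k (r + 1) ^ 2 - cheb k r) * h -
        cheb k (r + 2) * hcassini
    · linear_combination -cheb k (r + 1) * h
    · linear_combination cheb k (r + 1) * h
  rw [IsSolutionE, key]
  rcases hN _ h with hε | hε <;> rw [hε] <;> simp

lemma oplus_cons_append (x y x' y' : ZMod N) (l l' : List (ZMod N)) :
    oplus (x :: (l ++ [y])) (x' :: (l' ++ [y'])) = (x + y') :: (l ++ (y + x') :: l') := by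
  simp only [oplus, List.headD_cons, List.drop_succ_cons, List.drop_zero, List.dropLast_concat]
  rw [show x' :: (l' ++ [y']) = x' :: l' ++ [y'] from rfl, List.getLastD_concat,
    show x :: (l ++ [y]) = x :: l ++ [y] from rfl, List.getLastD_concat]

lemma isReducibleE_monoSol_iff (hN : TrivialSqrtOne N) (k : ZMod N) :
    IsReducibleE (monoSol N k) ↔
      ∃ j, 2 ≤ j ∧ j + 2 ≤ monomialSize N k ∧ cheb k j ^ 2 = 1 := by
  constructor
  · rintro ⟨a, b, ha, hb, hsol, hequiv⟩
    have hsum : oplus a b = List.replicate (monomialSize N k) k := by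
      rcases hequiv with ⟨i, hi⟩ | ⟨i, hi⟩ <;> simpa [monoSol, List.rotate_replicate] using hi
    obtain ⟨x, l, y, rfl⟩ := List.exists_eq_cons_append_singleton (by omega : 2 ≤ a.length)
    obtain ⟨x', l', y', rfl⟩ := List.exists_eq_cons_append_singleton (by omega : 2 ≤ b.length)
    rw [oplus_cons_append] at hsum
    have hl' : l' = List.replicate l'.length k := List.eq_replicate_of_mem fun z hz =>
      List.eq_of_mem_replicate (n := monomialSize N k) (by rw [← hsum]; simp [hz])
    have hlen := congrArg List.length hsum
    simp only [List.length_cons, List.length_append, List.length_replicate, List.length_nil]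
      at hlen ha hb
    rw [hl'] at hsol
    exact ⟨l'.length + 1, by omega, by omega, sq_cheb_eq_one_of_isSolutionE hsol⟩
  · rintro ⟨j, hj, hjn, hsq⟩
    obtain ⟨r, rfl⟩ : ∃ r, j = r + 2 := ⟨j - 2, by omega⟩
    set y := cheb k (r + 2) * cheb k (r + 1)
    refine ⟨(k - y) :: (List.replicate (monomialSize N k - (r + 3)) k ++ [k - y]),
      y :: (List.replicate (r + 1) k ++ [y]), by simp only [List.length_cons, List.length_append,
        List.length_replicate, List.length_nil]; omega, by simp,
      isSolutionE_of_sq_cheb_eq_one hN hsq, Or.inl ⟨0, ?_⟩⟩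
    rw [oplus_cons_append, List.rotate_zero, monoSol, sub_add_cancel, List.eq_replicate_iff]
    refine ⟨by simp only [List.length_cons, List.length_append, List.length_replicate]; omega,
      fun z hz => ?_⟩
    simp only [List.mem_cons, List.mem_append, List.mem_replicate] at hz
    tauto

lemma isIrreducibleE_monoSol_iff [Fact (1 < N)] (hN : TrivialSqrtOne N) (k : ZMod N) :
    IsIrreducibleE (monoSol N k) ↔
      k ≠ 0 ∧ ∀ j, 2 ≤ j → j + 2 ≤ monomialSize N k → cheb k j ^ 2 ≠ 1 := by
  have hsol : IsSolutionE (List.replicate (monomialSize N k) k) :=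
    (isSolutionE_replicate_iff hN k (monomialSize_spec hN k).1).mpr (monomialSize_spec hN k).2
  rw [IsIrreducibleE, isReducibleE_monoSol_iff hN, monoSol, List.length_replicate,
    three_le_monomialSize_iff hN]
  simp [hsol]

lemma monomialSize_eq_six [Fact (1 < N)] (hN : TrivialSqrtOne N) {k : ZMod N} (hk : k ≠ 0)
    (hk1 : k ^ 2 ≠ 1) (hcube : k ^ 3 = 3 * k) : monomialSize N k = 6 := by
  have hdvd := cheb_eq_zero_iff_monomialSize_dvd hN k
  have h6 := (hdvd 6).mp (by simp only [cheb]; linear_combination (k ^ 2 - 1) * hcube)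
  have hpos := (monomialSize_spec hN k).1
  have := Nat.le_of_dvd (by norm_num) h6
  interval_cases monomialSize N k
  · simpa using (hdvd 1).mpr dvd_rfl
  · exact absurd (by simpa using (hdvd 2).mpr dvd_rfl) hk
  · have h3 := (hdvd 3).mpr dvd_rfl
    simp only [cheb] at h3
    exact absurd (show k ^ 2 = 1 by linear_combination h3) hk1
  all_goals omega

lemma isIrreducibleE_monoSol_iff_of_pow_three [Fact (1 < N)] (hN : TrivialSqrtOne N) {k : ZMod N}
    (hk : k ≠ 0) (hk1 : k ^ 2 ≠ 1) (hcube : k ^ 3 = 3 * k) :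
    IsIrreducibleE (monoSol N k) ↔ k ^ 2 ≠ 0 := by
  have c3 : cheb k 3 = k ^ 2 - 1 := by simp only [cheb]; ring
  have c4 : cheb k 4 = k := by simp only [cheb]; linear_combination hcube
  rw [isIrreducibleE_monoSol_iff hN, monomialSize_eq_six hN hk hk1 hcube]
  refine ⟨fun ⟨_, h⟩ hk2 => h 3 (by norm_num) (by norm_num) ?_,
    fun hk2 => ⟨hk, fun j hj hj6 hj1 => ?_⟩⟩
  · rw [c3]; linear_combination (k ^ 2 - 2) * hk2
  have : j ≤ 4 := by omega
  interval_cases j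
  · exact hk1 (by simpa using hj1)
  · exact hk2 (by rw [c3] at hj1; linear_combination hj1 - k * hcube)
  · exact hk1 (by rwa [c4] at hj1)

end MonomialSolutions

section Residues

lemma cheb_intCast {R : Type*} [CommRing R] (a : ℤ) (n : ℕ) :
    cheb (a : R) n = ((cheb a n : ℤ) : R) :=
  (map_cheb a (Int.castRingHom R) n).symm

lemma cheb_zero_eq_zero_iff {R : Type*} [CommRing R] [Nontrivial R] (n : ℕ) :
    cheb (0 : R) n = 0 ↔ 2 ∣ n :=
  cheb_eq_zero_iff_dvd 0 two_pos (by simp)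
    (fun i hi hlt => by interval_cases i; simp) n

lemma cheb_eq_zero_iff_three_dvd {R : Type*} [CommRing R] [Nontrivial R] {k : R}
    (hk : k ^ 2 = 1) (n : ℕ) : cheb k n = 0 ↔ 3 ∣ n := by
  have hk0 : k ≠ 0 := by rintro rfl; simp at hk
  refine cheb_eq_zero_iff_dvd k three_pos ?_ (fun i hi hlt => by interval_cases i <;> simp [hk0]) n
  simp only [cheb]
  linear_combination hk

lemma natCast_dvd_cheb_iff (p : ℕ) (a : ℤ) (n : ℕ) :
    (p : ℤ) ∣ cheb a n ↔ cheb (a : ZMod p) n = 0 := by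
  rw [cheb_intCast, ZMod.intCast_zmod_eq_zero_iff_dvd]

lemma two_dvd_cheb_iff_of_two_dvd {a : ℤ} (ha : 2 ∣ a) (n : ℕ) : 2 ∣ cheb a n ↔ 2 ∣ n := by
  rw [← Nat.cast_ofNat, natCast_dvd_cheb_iff, (ZMod.intCast_zmod_eq_zero_iff_dvd a 2).mpr ha,
    cheb_zero_eq_zero_iff]

lemma two_dvd_cheb_iff_of_not_two_dvd {a : ℤ} (ha : ¬ 2 ∣ a) (n : ℕ) : 2 ∣ cheb a n ↔ 3 ∣ n := by
  have hsq : (a : ZMod 2) ^ 2 = 1 := by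
    have h := mt (ZMod.intCast_zmod_eq_zero_iff_dvd a 2).mp ha
    generalize (a : ZMod 2) = x at h
    revert x; decide
  rw [← Nat.cast_ofNat, natCast_dvd_cheb_iff, cheb_eq_zero_iff_three_dvd hsq]

lemma three_dvd_cheb_iff_of_three_dvd {a : ℤ} (ha : 3 ∣ a) (n : ℕ) : 3 ∣ cheb a n ↔ 2 ∣ n := by
  rw [← Nat.cast_ofNat, natCast_dvd_cheb_iff, (ZMod.intCast_zmod_eq_zero_iff_dvd a 3).mpr ha,
    cheb_zero_eq_zero_iff]

lemma three_dvd_cheb_iff_of_not_three_dvd {a : ℤ} (ha : ¬ 3 ∣ a) (n : ℕ) :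
    3 ∣ cheb a n ↔ 3 ∣ n := by
  have hsq : (a : ZMod 3) ^ 2 = 1 := by
    have h := mt (ZMod.intCast_zmod_eq_zero_iff_dvd a 3).mp ha
    generalize (a : ZMod 3) = x at h
    revert x; decide
  rw [← Nat.cast_ofNat, natCast_dvd_cheb_iff, cheb_eq_zero_iff_three_dvd hsq]

lemma two_dvd_cheb_of_six_dvd (a : ℤ) {n : ℕ} (hn : 6 ∣ n) : 2 ∣ cheb a n := by
  by_cases ha : 2 ∣ a
  · exact (two_dvd_cheb_iff_of_two_dvd ha n).mpr (dvd_trans (by norm_num) hn)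
  · exact (two_dvd_cheb_iff_of_not_two_dvd ha n).mpr (dvd_trans (by norm_num) hn)

end Residues

section ThreeAdic

lemma sq_dvd_cheb_two_mul (a : ℤ) (c : ℕ) :
    a ^ 2 ∣ cheb a (2 * c) + (-1) ^ c * c * a ∧ a ^ 2 ∣ cheb a (2 * c + 1) - (-1) ^ c := by
  induction c with
  | zero => simp
  | succ c ih =>
    obtain ⟨⟨s, hs⟩, ⟨t, ht⟩⟩ := ih
    have heven : cheb a (2 * (c + 1)) = a * cheb a (2 * c + 1) - cheb a (2 * c) :=
      cheb_add_two a (2 * c)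
    have hodd : cheb a (2 * (c + 1) + 1) = a * cheb a (2 * (c + 1)) - cheb a (2 * c + 1) :=
      cheb_add_two a (2 * c + 1)
    refine ⟨⟨a * t - s, ?_⟩, ⟨a * (a * t - s) + (-1) ^ c * (c + 1) - t, ?_⟩⟩
    · rw [heven]; push_cast; linear_combination a * ht - hs
    · rw [hodd, heven]; linear_combination (a ^ 2) * ht - a * hs - ht

lemma exists_cheb_two_mul_eq_three_pow_mul {v : ℕ} (hv : 1 ≤ v) {u : ℤ} (hu : ¬ 3 ∣ u) {c : ℕ}
    (hc : ¬ 3 ∣ c) (e : ℕ) :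
    ∃ g, cheb (3 ^ v * u) (2 * (3 ^ e * c)) = 3 ^ (v + e) * g ∧ ¬ 3 ∣ g := by
  have ha : (3 : ℤ) ∣ 3 ^ v * u := dvd_mul_of_dvd_left (dvd_pow_self 3 (by omega)) u
  induction e with
  | zero =>
    obtain ⟨s, hs⟩ := (sq_dvd_cheb_two_mul (3 ^ v * u) c).1
    refine ⟨3 ^ v * u ^ 2 * s - (-1) ^ c * c * u, ?_, fun hg => ?_⟩
    · simp only [pow_zero, one_mul, add_zero]
      linear_combination hs
    have h : (3 : ℤ) ∣ (-1) ^ c * (c * u) := by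
      have h3 : (3 : ℤ) ∣ 3 ^ v * u ^ 2 * s :=
        dvd_mul_of_dvd_left (dvd_mul_of_dvd_left (dvd_pow_self 3 (by omega)) _) _
      exact (dvd_sub h3 hg).trans (dvd_of_eq (by ring))
    rw [(isUnit_neg_one.pow c).dvd_mul_left] at h
    rcases Int.prime_three.dvd_or_dvd h with h | h
    · exact hc (by exact_mod_cast h)
    · exact hu h
  | succ e ih =>
    obtain ⟨g, hg, hg3⟩ := ih
    set n := 2 * (3 ^ e * c)
    set y := cheb (3 ^ v * u) (n + 1)
    have hy : ¬ 3 ∣ y := by rw [three_dvd_cheb_iff_of_three_dvd ha]; omega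
    obtain ⟨s, hs⟩ : ∃ s, v + e = s + 1 := ⟨v + e - 1, by omega⟩
    -- by `cheb_three_mul`, the second factor is `3 * y ^ 2` modulo `9`: exactly one more `3`
    refine ⟨g * (y ^ 2 - 3 ^ v * u * 3 ^ (v + e) * g * y +
      ((3 ^ v * u) ^ 2 - 1) * 3 ^ (2 * s + 1) * g ^ 2), ?_, fun h => ?_⟩
    · rw [show 2 * (3 ^ (e + 1) * c) = 3 * n by ring, cheb_three_mul, hg, ← add_assoc, hs]
      ring
    rcases Int.prime_three.dvd_or_dvd h with h | h
    · exact hg3 h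
    have h3y : (3 : ℤ) ∣ y ^ 2 := by
      have h1 : (3 : ℤ) ∣ 3 ^ v * u * 3 ^ (v + e) * g * y :=
        dvd_mul_of_dvd_left (dvd_mul_of_dvd_left (dvd_mul_of_dvd_left ha _) _) _
      have h2 : (3 : ℤ) ∣ ((3 ^ v * u) ^ 2 - 1) * 3 ^ (2 * s + 1) * g ^ 2 :=
        dvd_mul_of_dvd_left (dvd_mul_of_dvd_right (dvd_pow_self 3 (by omega)) _) _
      exact (dvd_sub (dvd_add h h1) h2).trans (dvd_of_eq (by ring))
    exact hy (Int.prime_three.dvd_of_dvd_pow h3y)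

lemma two_mul_three_pow_dvd_of_three_pow_dvd_cheb {v : ℕ} (hv : 1 ≤ v) {u : ℤ} (hu : ¬ 3 ∣ u)
    {t i : ℕ} (h : 3 ^ (v + t + 1) ∣ cheb (3 ^ v * u) i) : 2 * 3 ^ (t + 1) ∣ i := by
  rcases Nat.eq_zero_or_pos i with rfl | hi
  · exact dvd_zero _
  have h3 : (3 : ℤ) ∣ cheb (3 ^ v * u) i := (dvd_pow_self 3 (by omega)).trans h
  obtain ⟨i, rfl⟩ :=
    (three_dvd_cheb_iff_of_three_dvd (dvd_mul_of_dvd_left (dvd_pow_self 3 (by omega)) u) _).mp h3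
  obtain ⟨e, c, hc, rfl⟩ := Nat.exists_eq_pow_mul_and_not_dvd (by omega : i ≠ 0) 3 (by norm_num)
  obtain ⟨g, hg, hg3⟩ := exists_cheb_two_mul_eq_three_pow_mul hv hu hc e
  have he : t + 1 ≤ e := by
    by_contra! he
    rw [hg, show v + t + 1 = v + e + (t + 1 - e) by omega, pow_add] at h
    exact hg3 ((dvd_pow_self 3 (by omega)).trans ((mul_dvd_mul_iff_left (by positivity)).mp h))
  exact mul_dvd_mul_left 2 (dvd_mul_of_dvd_left (pow_dvd_pow 3 he) c)

end ThreeAdic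

section TwoMulThreePow

variable {m : ℕ}

instance fact_one_lt_two_mul_three_pow : Fact (1 < 2 * 3 ^ m) :=
  ⟨by have := Nat.one_le_pow m 3 (by norm_num); omega⟩

lemma intCast_zmod_two_mul_three_pow_eq_zero_iff (x : ℤ) :
    (x : ZMod (2 * 3 ^ m)) = 0 ↔ 2 ∣ x ∧ 3 ^ m ∣ x := by
  rw [ZMod.intCast_zmod_eq_zero_iff_dvd]
  push_cast
  refine ⟨fun h => ⟨(dvd_mul_right _ _).trans h, (dvd_mul_left _ _).trans h⟩, fun ⟨h2, h3⟩ => ?_⟩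
  exact (Int.isCoprime_iff_gcd_eq_one.mpr rfl).pow_right.mul_dvd h2 h3

lemma trivialSqrtOne_two_mul_three_pow (hm : 1 ≤ m) : TrivialSqrtOne (2 * 3 ^ m) := by
  intro x hx
  obtain ⟨a, rfl⟩ := ZMod.intCast_surjective x
  have h : ((((a - 1) * (a + 1) : ℤ)) : ZMod (2 * 3 ^ m)) = 0 := by
    push_cast
    linear_combination hx
  obtain ⟨h2, h3⟩ := (intCast_zmod_two_mul_three_pow_eq_zero_iff _).mp h
  have hodd : 2 ∣ a - 1 ∧ 2 ∣ a + 1 := by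
    rcases Int.prime_two.dvd_or_dvd h2 with h | h <;> omega
  rcases Int.prime_three.dvd_or_dvd ((dvd_pow_self 3 (by omega)).trans h3) with h | h
  · left
    rw [← sub_eq_zero, ← Int.cast_one, ← Int.cast_sub, intCast_zmod_two_mul_three_pow_eq_zero_iff]
    exact ⟨hodd.1, Int.prime_three.pow_dvd_of_dvd_mul_right m (by omega) h3⟩
  · right
    rw [← add_eq_zero_iff_eq_neg, ← Int.cast_one, ← Int.cast_add,
      intCast_zmod_two_mul_three_pow_eq_zero_iff]
    exact ⟨hodd.2, Int.prime_three.pow_dvd_of_dvd_mul_left m (by omega) h3⟩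

lemma cheb_intCast_eq_zero_iff (a : ℤ) (n : ℕ) :
    cheb (a : ZMod (2 * 3 ^ m)) n = 0 ↔ 2 ∣ cheb a n ∧ 3 ^ m ∣ cheb a n := by
  rw [cheb_intCast, intCast_zmod_two_mul_three_pow_eq_zero_iff]

lemma sq_cheb_intCast_eq_one_iff (a : ℤ) (n : ℕ) :
    cheb (a : ZMod (2 * 3 ^ m)) (n + 1) ^ 2 = 1 ↔
      2 ∣ cheb a n * cheb a (n + 2) ∧ 3 ^ m ∣ cheb a n * cheb a (n + 2) := by
  have h : cheb a (n + 1) ^ 2 - 1 = cheb a n * cheb a (n + 2) := by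
    linear_combination cheb_sq_sub_mul a n
  rw [← sub_eq_zero, cheb_intCast, ← Int.cast_pow, ← Int.cast_one, ← Int.cast_sub, h,
    intCast_zmod_two_mul_three_pow_eq_zero_iff]

lemma two_dvd_and_three_pow_dvd_cheb_of_dvd_mul {a : ℤ} (ha : ¬ 3 ∣ a) {i i' : ℕ} (hi : 3 ∣ i)
    (hi' : ¬ 3 ∣ i') (hpar : 2 ∣ i ↔ 2 ∣ i') (h2 : 2 ∣ cheb a i * cheb a i')
    (h3 : 3 ^ m ∣ cheb a i * cheb a i') : 2 ∣ cheb a i ∧ 3 ^ m ∣ cheb a i := by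
  refine ⟨?_, Int.prime_three.pow_dvd_of_dvd_mul_right m
    (mt (three_dvd_cheb_iff_of_not_three_dvd ha i').mp hi') h3⟩
  by_cases ha2 : 2 ∣ a
  · rw [two_dvd_cheb_iff_of_two_dvd ha2]
    rcases Int.prime_two.dvd_or_dvd h2 with h | h
    · exact (two_dvd_cheb_iff_of_two_dvd ha2 i).mp h
    · exact hpar.mpr ((two_dvd_cheb_iff_of_two_dvd ha2 i').mp h)
  · exact (two_dvd_cheb_iff_of_not_two_dvd ha2 i).mpr hi

lemma isIrreducibleE_monoSol_of_not_three_dvd (hm : 1 ≤ m) {a : ℤ} (ha : ¬ 3 ∣ a) :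
    IsIrreducibleE (monoSol (2 * 3 ^ m) (a : ZMod (2 * 3 ^ m))) := by
  have hN := trivialSqrtOne_two_mul_three_pow hm
  have h3m : (3 : ℤ) ∣ 3 ^ m := dvd_pow_self 3 (by omega)
  rw [isIrreducibleE_monoSol_iff hN]
  refine ⟨fun h => ha (h3m.trans ((intCast_zmod_two_mul_three_pow_eq_zero_iff a).mp h).2),
    fun j hj hjn hsq => ?_⟩
  have hmin : ∀ i, 0 < i → i < monomialSize (2 * 3 ^ m) (a : ZMod (2 * 3 ^ m)) →
      ¬ (2 ∣ cheb a i ∧ 3 ^ m ∣ cheb a i) := fun i hi hlt h =>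
    Nat.not_dvd_of_pos_of_lt hi hlt
      ((cheb_eq_zero_iff_monomialSize_dvd hN _ i).mp ((cheb_intCast_eq_zero_iff a i).mpr h))
  obtain ⟨n, rfl⟩ : ∃ n, j = n + 1 := ⟨j - 1, by omega⟩
  obtain ⟨h2, h3⟩ := (sq_cheb_intCast_eq_one_iff a n).mp hsq
  rcases Int.prime_three.dvd_or_dvd (h3m.trans h3) with h | h
  · have hn := (three_dvd_cheb_iff_of_not_three_dvd ha n).mp h
    exact hmin n (by omega) (by omega)
      (two_dvd_and_three_pow_dvd_cheb_of_dvd_mul ha hn (by omega) (by omega) h2 h3)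
  · have hn := (three_dvd_cheb_iff_of_not_three_dvd ha (n + 2)).mp h
    rw [mul_comm] at h2 h3
    exact hmin (n + 2) (by omega) (by omega)
      (two_dvd_and_three_pow_dvd_cheb_of_dvd_mul ha hn (by omega) (by omega) h2 h3)

lemma intCast_pow_three_eq (hm : 2 ≤ m) {a : ℤ} (ha : 3 ^ (m - 1) ∣ a) :
    (a : ZMod (2 * 3 ^ m)) ^ 3 = 3 * a := by
  obtain ⟨w, rfl⟩ : ∃ w, m = w + 2 := ⟨m - 2, by omega⟩
  rw [show w + 2 - 1 = w + 1 from rfl] at ha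
  obtain ⟨t, rfl⟩ := ha
  obtain ⟨r, hr⟩ := Int.even_mul_succ_self (3 ^ (w + 1) * t)
  have h := (intCast_zmod_two_mul_three_pow_eq_zero_iff (m := w + 2)
    ((3 ^ (w + 1) * t) ^ 3 - 3 * (3 ^ (w + 1) * t))).mpr
      ⟨⟨r * (3 ^ (w + 1) * t - 1) - 3 ^ (w + 1) * t,
        by linear_combination (3 ^ (w + 1) * t - 1) * hr⟩,
        ⟨3 ^ (2 * w + 1) * t ^ 3 - t, by ring⟩⟩
  push_cast at h ⊢
  linear_combination h

lemma intCast_sq_eq_zero_iff (hm : 2 ≤ m) {a : ℤ} (ha : 3 ^ (m - 1) ∣ a) :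
    (a : ZMod (2 * 3 ^ m)) ^ 2 = 0 ↔ 2 ∣ a := by
  obtain ⟨w, rfl⟩ : ∃ w, m = w + 2 := ⟨m - 2, by omega⟩
  rw [show w + 2 - 1 = w + 1 from rfl] at ha
  obtain ⟨t, rfl⟩ := ha
  rw [← Int.cast_pow, intCast_zmod_two_mul_three_pow_eq_zero_iff]
  exact ⟨fun h => Int.prime_two.dvd_of_dvd_pow h.1,
    fun h => ⟨dvd_pow h two_ne_zero, ⟨3 ^ w * t ^ 2, by ring⟩⟩⟩

lemma intCast_sq_ne_one (hm : 1 ≤ m) {a : ℤ} (ha : 3 ∣ a) : (a : ZMod (2 * 3 ^ m)) ^ 2 ≠ 1 := by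
  intro h
  have h3 : (3 : ℤ) ∣ a ^ 2 - 1 := (dvd_pow_self 3 (by omega : m ≠ 0)).trans
    ((intCast_zmod_two_mul_three_pow_eq_zero_iff _).mp (by push_cast; rw [h, sub_self])).2
  have := dvd_sub (dvd_pow ha two_ne_zero) h3
  norm_num at this

lemma isIrreducibleE_monoSol_iff_of_three_pow_dvd (hm : 2 ≤ m) {a : ℤ} (ha : 3 ^ (m - 1) ∣ a) :
    IsIrreducibleE (monoSol (2 * 3 ^ m) (a : ZMod (2 * 3 ^ m))) ↔ ¬ 2 ∣ a := by
  have hN := trivialSqrtOne_two_mul_three_pow (by omega : 1 ≤ m)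
  by_cases hk : (a : ZMod (2 * 3 ^ m)) = 0
  · simp [isIrreducibleE_monoSol_iff hN, hk,
      ((intCast_zmod_two_mul_three_pow_eq_zero_iff a).mp hk).1]
  rw [isIrreducibleE_monoSol_iff_of_pow_three hN hk
    (intCast_sq_ne_one (by omega) ((dvd_pow_self 3 (by omega)).trans ha))
    (intCast_pow_three_eq hm ha), ne_eq, intCast_sq_eq_zero_iff hm ha]

lemma not_isIrreducibleE_monoSol_of_three_dvd {a : ℤ} (h3 : 3 ∣ a) (ha : ¬ 3 ^ (m - 1) ∣ a) :
    ¬ IsIrreducibleE (monoSol (2 * 3 ^ m) (a : ZMod (2 * 3 ^ m))) := by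
  have hm : 1 ≤ m := by
    by_contra h
    exact ha (by simp [show m = 0 by omega])
  have hN := trivialSqrtOne_two_mul_three_pow hm
  obtain ⟨v, u, hu, rfl⟩ :=
    Int.exists_eq_pow_mul_and_not_dvd (a := a) (p := 3) (by rintro rfl; exact ha (dvd_zero _))
      (by norm_num)
  have hv : 1 ≤ v := by
    by_contra h
    simp only [show v = 0 by omega, pow_zero, one_mul] at h3
    exact hu h3
  have hvm : v + 2 ≤ m := by
    by_contra h
    exact ha (dvd_mul_of_dvd_left (pow_dvd_pow 3 (by omega)) u)
  obtain ⟨T, rfl⟩ : ∃ T, m = v + T + 1 := ⟨m - v - 1, by omega⟩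
  rw [isIrreducibleE_monoSol_iff hN]
  rintro ⟨-, hirr⟩
  obtain ⟨g, hg, -⟩ := exists_cheb_two_mul_eq_three_pow_mul hv hu (c := 1) (by norm_num) T
  rw [mul_one] at hg
  have h3T : 3 ≤ 3 ^ T := Nat.le_self_pow (by omega) 3
  refine hirr (2 * 3 ^ T + 1) (by omega) ?_ ((sq_cheb_intCast_eq_one_iff _ _).mpr ⟨?_, ?_⟩)
  · obtain ⟨hpos, hzero⟩ := monomialSize_spec hN ((3 ^ v * u : ℤ) : ZMod _)
    have h := Nat.le_of_dvd hpos (two_mul_three_pow_dvd_of_three_pow_dvd_cheb hv hu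
      ((cheb_intCast_eq_zero_iff _ _).mp hzero).2)
    rw [pow_succ] at h
    omega
  · exact dvd_mul_of_dvd_left
      (two_dvd_cheb_of_six_dvd _ (mul_dvd_mul_left 2 (dvd_pow_self 3 (by omega)))) _
  · rw [hg, pow_succ]
    exact mul_dvd_mul (dvd_mul_right _ _)
      ((three_dvd_cheb_iff_of_three_dvd h3 _).mpr ⟨3 ^ T + 1, by ring⟩)

theorem isIrreducibleE_monoSol_intCast_iff (hm : 2 ≤ m) (a : ℤ) :
    IsIrreducibleE (monoSol (2 * 3 ^ m) (a : ZMod (2 * 3 ^ m))) ↔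
      ¬ 3 ∣ a ∨ (3 ^ (m - 1) ∣ a ∧ ¬ 2 ∣ a) := by
  by_cases h3 : 3 ∣ a
  · by_cases h : 3 ^ (m - 1) ∣ a
    · simp [h3, h, isIrreducibleE_monoSol_iff_of_three_pow_dvd hm h]
    · simp [h3, h, not_isIrreducibleE_monoSol_of_three_dvd h3 h]
  · simp [h3, isIrreducibleE_monoSol_of_not_three_dvd (m := m) (by omega) h3]

end TwoMulThreePow

section Counting

open Finset

lemma card_filter_range_mul_dvd {M : ℕ} (hM : 0 < M) (L : ℕ) (P : ℕ → Prop) [DecidablePred P] :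
    #{n ∈ range (M * L) | M ∣ n ∧ P n} = #{d ∈ range L | P (M * d)} := by
  rw [← card_image_of_injective {d ∈ range L | P (M * d)} (mul_right_injective₀ hM.ne')]
  congr 1
  ext n
  simp only [mem_filter, mem_range, mem_image]
  constructor
  · rintro ⟨hn, ⟨d, rfl⟩, hP⟩
    exact ⟨d, ⟨Nat.lt_of_mul_lt_mul_left hn, hP⟩, rfl⟩
  · rintro ⟨d, ⟨hd, hP⟩, rfl⟩
    exact ⟨Nat.mul_lt_mul_of_pos_left hd hM, dvd_mul_right _ _, hP⟩

lemma card_filter_range_six_mul {M : ℕ} (h3 : 3 ∣ M) (h2 : ¬ 2 ∣ M) :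
    #{n ∈ range (6 * M) | ¬ 3 ∣ n ∨ (M ∣ n ∧ ¬ 2 ∣ n)} = 4 * M + 3 := by
  have hM : 0 < M := Nat.pos_of_ne_zero (by rintro rfl; exact h2 (dvd_zero 2))
  have hcop : Nat.Coprime 2 M := (Nat.Prime.coprime_iff_not_dvd Nat.prime_two).mpr h2
  have hnot3 : #{n ∈ range (6 * M) | ¬ 3 ∣ n} = 4 * M := by
    have h := card_filter_range_mul_dvd three_pos (2 * M) (fun _ => True)
    simp only [and_true, filter_true, card_range] at h
    rw [filter_not, card_sdiff_of_subset (filter_subset _ _), card_range,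
      show 6 * M = 3 * (2 * M) by ring, h]
    omega
  have hodd : #{n ∈ range (6 * M) | M ∣ n ∧ ¬ 2 ∣ n} = 3 := by
    rw [mul_comm, card_filter_range_mul_dvd hM]
    simp only [hcop.dvd_mul_left]
    decide
  rw [filter_or, card_union_of_disjoint, hnot3, hodd]
  rw [disjoint_filter]
  rintro n - hn ⟨hMn, -⟩
  exact hn (h3.trans hMn)

lemma card_subtype_val_eq (N : ℕ) [NeZero N] (P : ℕ → Prop) [DecidablePred P] :
    Nat.card {k : ZMod N // P k.val} = #{n ∈ range N | P n} := by
  rw [Nat.card_eq_fintype_card, Fintype.card_subtype,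
    ← card_image_of_injective _ (ZMod.val_injective N)]
  congr 1
  ext n
  simp only [mem_image, mem_filter, mem_univ, true_and, mem_range]
  constructor
  · rintro ⟨k, hk, rfl⟩
    exact ⟨k.val_lt, hk⟩
  · rintro ⟨hn, hP⟩
    exact ⟨n, by rwa [ZMod.val_cast_of_lt hn], ZMod.val_cast_of_lt hn⟩

end Counting

/-- for `N = 2·3^m` with `m ≥ 2`, the number of `k ∈ ZMod N` whose
`k`-monomial minimal solution of `(E_N)` is irreducible equals `4·3^(m-1) + 3`. -/
theorem stmt_3 (m : ℕ) (hm : 2 ≤ m) :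
    Nat.card {k : ZMod (2 * 3 ^ m) // IsIrreducibleE (monoSol (2 * 3 ^ m) k)} =
      4 * 3 ^ (m - 1) + 3 := by
  have hiff (k : ZMod (2 * 3 ^ m)) : IsIrreducibleE (monoSol (2 * 3 ^ m) k) ↔
      ¬ 3 ∣ k.val ∨ (3 ^ (m - 1) ∣ k.val ∧ ¬ 2 ∣ k.val) := by
    have h := isIrreducibleE_monoSol_intCast_iff hm (k.val : ℤ)
    rw [Int.cast_natCast, ZMod.natCast_zmod_val] at h
    exact_mod_cast h
  rw [Nat.card_congr (Equiv.subtypeEquivRight hiff),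
    card_subtype_val_eq _ fun n => ¬ 3 ∣ n ∨ (3 ^ (m - 1) ∣ n ∧ ¬ 2 ∣ n),
    ← show 6 * 3 ^ (m - 1) = 2 * 3 ^ m by
      rw [show 6 = 2 * 3 from rfl, mul_assoc, ← pow_succ', Nat.sub_add_cancel (by omega)]]
  exact card_filter_range_six_mul (dvd_pow_self 3 (by omega)) (Odd.pow (by decide)).not_two_dvd_nat
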